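/- arXiv:1407.2992 — 3 statements merged into one kernel-verified Lean document; each statement's English description precedes it below -/
import Mathlib

section
/- Let Y, X, Z, X', Z' be sets with maps π_u: Z → X, η_X: X → X', η_Z: Z → Z', π'_u: Z' → X' such that η_X ∘ π_u = π'_u ∘ η_Z, and suppose the map π_u × η_Z: Z → {(x,z') ∈ X × Z' : η_X(x) = π'_u(z')} is a bijection. Let π_s: Y → X, π'_s: Y' → X', η_Y: Y → Y' be maps with π'_s ∘ η_Y = η_X ∘ π_s. Define Σ₁₁ = {(y₀,y₁,z₀,z₁) ∈ Y²×Z² : π_s(y₀)=π_s(y₁)=π_u(z₀)=π_u(z₁)}, Σ'₁₁ similarly with primes, Σ₁₀ = {(y₀,y₁,z₀) : π_s(y₀)=π_s(y₁)=π_u(z₀)}, and let η₁₁: Σ₁₁ → Σ'₁₁ be the map applying η_Y, η_Y, η_Z, η_Z coordinatewise, δ: Σ₁₁ → Σ₁₀ the map deleting the last Z-coordinate, and similarly δ': Σ'₁₁ → Σ'₁₀ and η₁₀: Σ₁₀ → Σ'₁₀. Then η₁₁ × δ: Σ₁₁ → {(a,b) ∈ Σ'₁₁ × Σ₁₀ :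 δ'(a) = η₁₀(b)} is a bijection. -/
variable {Y X Z Y' X' Z' : Type*}

/-- The 1,1-fold fibre product: pairs of `Y`'s and pairs of `Z`'s with equal images in `X`. -/
def Sig11 (πs : Y → X) (πu : Z → X) : Type _ :=
  {q : (Y × Y) × Z × Z //
    πs q.1.1 = πs q.1.2 ∧ πs q.1.1 = πu q.2.1 ∧ πs q.1.1 = πu q.2.2}

/-- The 1,0-fold fibre product. -/
def Sig10 (πs : Y → X) (πu : Z → X) : Type _ :=
  {q : (Y × Y) × Z // πs q.1.1 = πs q.1.2 ∧ πs q.1.1 = πu q.2}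

/-- The coordinatewise map `Σ₁₁ → Σ'₁₁` induced by `η_Y`, `η_Z`. -/
def eta11 (πs : Y → X) (πu : Z → X) (ηX : X → X') (ηY : Y → Y') (ηZ : Z → Z')
    (πs' : Y' → X') (πu' : Z' → X')
    (hY : ∀ y, πs' (ηY y) = ηX (πs y)) (hZ : ∀ z, πu' (ηZ z) = ηX (πu z)) :
    Sig11 πs πu → Sig11 πs' πu' := fun q =>
  ⟨((ηY q.val.1.1, ηY q.val.1.2), (ηZ q.val.2.1, ηZ q.val.2.2)),
   by
    obtain ⟨h1, h2, h3⟩ := q.prop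
    refine ⟨?_, ?_, ?_⟩ <;> simp only [hY, hZ, ← h1, ← h2, ← h3]⟩

/-- The coordinatewise map `Σ₁₀ → Σ'₁₀`. -/
def eta10 (πs : Y → X) (πu : Z → X) (ηX : X → X') (ηY : Y → Y') (ηZ : Z → Z')
    (πs' : Y' → X') (πu' : Z' → X')
    (hY : ∀ y, πs' (ηY y) = ηX (πs y)) (hZ : ∀ z, πu' (ηZ z) = ηX (πu z)) :
    Sig10 πs πu → Sig10 πs' πu' := fun q =>
  ⟨((ηY q.val.1.1, ηY q.val.1.2), ηZ q.val.2),
   by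
    obtain ⟨h1, h2⟩ := q.prop
    exact ⟨by simp only [hY, h1], by simp only [hY, hZ, h2]⟩⟩

/-- Deleting the last `Z`-coordinate. -/
def delta11 (πs : Y → X) (πu : Z → X) : Sig11 πs πu → Sig10 πs πu := fun q =>
  ⟨(q.val.1, q.val.2.1), ⟨q.prop.1, q.prop.2.1⟩⟩

/-! An element of `Σ₁₁` is determined by its image under `δ` and its last coordinate `z₁`.
Since `π_u × η_Z` is a bijection onto `X ×_{X'} Z'`, that coordinate is in turn determined by
`π_u z₁ = π_s y₀`, which `δ` remembers, and by `η_Z z₁`, which `η₁₁` remembers; conversely every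
compatible pair `(π_s y₀, z'₁)` is attained by some `z₁`, which extends an element of `Σ₁₀`
to a preimage in `Σ₁₁`. -/

section

variable {πs : Y → X} {πu : Z → X}

def Sig10.extend (b : Sig10 πs πu) (z : Z) (hz : πs b.val.1.1 = πu z) : Sig11 πs πu :=
  ⟨(b.val.1, b.val.2, z), b.prop.1, b.prop.2, hz⟩

theorem delta11_extend (b : Sig10 πs πu) (z : Z) (hz : πs b.val.1.1 = πu z) :
    delta11 πs πu (b.extend z hz) = b :=
  rfl

theorem Sig11.ext_of_delta11 {s t : Sig11 πs πu} (hδ : delta11 πs πu s = delta11 πs πu t)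
    (hz : s.val.2.2 = t.val.2.2) : s = t := by
  obtain ⟨⟨y, z₀, z₁⟩, hs⟩ := s
  obtain ⟨⟨y', z₀', z₁'⟩, ht⟩ := t
  cases congrArg Subtype.val hδ
  cases hz
  rfl

theorem delta11_eta11 (ηX : X → X') (ηY : Y → Y') (ηZ : Z → Z') (πs' : Y' → X') (πu' : Z' → X')
    (hY : ∀ y, πs' (ηY y) = ηX (πs y)) (hZ : ∀ z, πu' (ηZ z) = ηX (πu z)) (s : Sig11 πs πu) :
    delta11 πs' πu' (eta11 πs πu ηX ηY ηZ πs' πu' hY hZ s) =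
      eta10 πs πu ηX ηY ηZ πs' πu' hY hZ (delta11 πs πu s) :=
  rfl

end

theorem stmt5 (πs : Y → X) (πu : Z → X) (ηX : X → X') (ηY : Y → Y') (ηZ : Z → Z')
    (πs' : Y' → X') (πu' : Z' → X')
    (hY : ∀ y, πs' (ηY y) = ηX (πs y)) (hZ : ∀ z, πu' (ηZ z) = ηX (πu z))
    (hconj : Function.Bijective
      (fun z : Z => (⟨(πu z, ηZ z), (hZ z).symm⟩ : {p : X × Z' // ηX p.1 = πu' p.2}))) :
    Function.Bijective
      (fun s : Sig11 πs πu =>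
        (⟨(eta11 πs πu ηX ηY ηZ πs' πu' hY hZ s, delta11 πs πu s),
          Subtype.ext rfl⟩ :
          {p : Sig11 πs' πu' × Sig10 πs πu //
            delta11 πs' πu' p.1 = eta10 πs πu ηX ηY ηZ πs' πu' hY hZ p.2})) := by
  obtain ⟨hinj, hsurj⟩ := hconj
  refine ⟨fun s t hst => ?_, fun ⟨⟨a, b⟩, hab⟩ => ?_⟩
  · have hδ : delta11 πs πu s = delta11 πs πu t := congrArg (·.val.2) hst
    have hπu : πu s.val.2.2 = πu t.val.2.2 :=
      calc πu s.val.2.2 = πs s.val.1.1 := s.prop.2.2.symm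
        _ = πs t.val.1.1 := congrArg (πs ·.val.1.1) hδ
        _ = πu t.val.2.2 := t.prop.2.2
    have hηZ : ηZ s.val.2.2 = ηZ t.val.2.2 := congrArg (·.val.1.val.2.2) hst
    exact Sig11.ext_of_delta11 hδ (hinj (Subtype.ext (Prod.ext hπu hηZ)))
  · have hcompat : ηX (πs b.val.1.1) = πu' a.val.2.2 :=
      calc ηX (πs b.val.1.1) = πs' (ηY b.val.1.1) := (hY _).symm
        _ = πs' a.val.1.1 := congrArg (πs' ·.val.1.1) hab.symm
        _ = πu' a.val.2.2 := a.prop.2.2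
    obtain ⟨z, hz⟩ := hsurj ⟨(πs b.val.1.1, a.val.2.2), hcompat⟩
    have hπu : πs b.val.1.1 = πu z := (congrArg (·.val.1) hz).symm
    refine ⟨b.extend z hπu, Subtype.ext (Prod.ext ?_ (delta11_extend b z hπu))⟩
    exact Sig11.ext_of_delta11 ((delta11_eta11 ηX ηY ηZ πs' πu' hY hZ _).trans hab.symm)
      (congrArg (·.val.2) hz)
end

section
/- Let G be the directed graph with two vertices v₁, v₂, a loop a₁ at v₁, a loop a₂ at v₂, an edge b₁ from v₁ to v₂ and an edge b₂ from v₂ to v₁, and let H be the graph with one vertex v and two loops a, b. Let π be the graph homomorphism sending v₁,v₂ ↦ v, a₁,a₂ ↦ a, b₁,b₂ ↦ b. Then the induced map on bi-infinite edge sequences π: Σ_G → Σ_H (where Σ_G is the set of bi-infinite paths (eᵏ)_{k∈ℤ} with t(eᵏ)=i(eᵏ⁺¹), and π applied coordinatewise) is a well-defined surjection commuting with the left shift, and is exactly 2-to-1: every point of Σ_H has precisely two preimages. -/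
/-- Edges of the graph `G`: an edge is the pair (initial vertex, terminal vertex),
with vertices `Bool` (`false = v₁`, `true = v₂`).  The four edges are
`a₁ = (false,false)`, `a₂ = (true,true)`, `b₁ = (false,true)`, `b₂ = (true,false)`. -/
abbrev EdgeG := Bool × Bool

/-- The shift of finite type of `G`: bi-infinite edge paths. -/
def SigG : Type := {e : ℤ → EdgeG // ∀ k, (e k).2 = (e (k + 1)).1}

/-- The shift of finite type of `H` (one vertex, two loops `a = false`, `b = true`):
every bi-infinite edge sequence is a path. -/
def SigH : Type := ℤ → Bool

/-- The graph homomorphism on edges: loops `a₁, a₂ ↦ a`, the edges `b₁, b₂ ↦ b`. -/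
def piE (e : EdgeG) : Bool := xor e.1 e.2

/-- The induced map on bi-infinite paths, applied coordinatewise. -/
def piSig (e : SigG) : SigH := fun k => piE (e.val k)

/-- The left shift on `Σ_G`. -/
def shiftG (e : SigG) : SigG := ⟨fun k => e.val (k + 1), fun k => e.prop (k + 1)⟩

/-- The left shift on `Σ_H`. -/
def shiftH (h : SigH) : SigH := fun k => h (k + 1)

/-!
A point of `Σ_G` is determined by the sequence of vertices it visits, and for every label `c` of `H`
and every vertex `x` of `G` there is exactly one edge of `G` leaving `x` with label `c`, namely
`(x, xor x c)`, and exactly one entering it. So a lift of `h ∈ Σ_H` is the same as a bi-infinite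
solution of `x (k + 1) = xor (x k) (h k)`, and such solutions are in bijection with their value
`x 0 ∈ {v₁, v₂}`.
-/

section IntTrajectory

variable {α : Type*} (φ : ℤ → α ≃ α)

/-- The solution of `x (k + 1) = φ k (x k)` on all of `ℤ` with `x 0 = a`. -/
def intTrajectory (a : α) (k : ℤ) : α :=
  Int.inductionOn' k 0 a (fun k _ x => φ k x) (fun k _ x => (φ (k - 1)).symm x)

lemma intTrajectory_zero (a : α) : intTrajectory φ a 0 = a :=
  Int.inductionOn'_self

lemma intTrajectory_add_one (a : α) (k : ℤ) :
    intTrajectory φ a (k + 1) = φ k (intTrajectory φ a k) := by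
  rcases le_or_gt 0 k with hk | hk
  · exact Int.inductionOn'_add_one hk
  · have hpred : intTrajectory φ a (k + 1 - 1) = (φ (k + 1 - 1)).symm (intTrajectory φ a (k + 1)) :=
      Int.inductionOn'_sub_one (by omega)
    rw [add_sub_cancel_right] at hpred
    rw [hpred, Equiv.apply_symm_apply]

lemma eq_intTrajectory_of_add_one {x : ℤ → α} (hx : ∀ k, x (k + 1) = φ k (x k)) :
    x = intTrajectory φ (x 0) := by
  funext k
  induction k using Int.induction_on with
  | zero => exact (intTrajectory_zero φ _).symm
  | succ k ih => rw [hx, intTrajectory_add_one, ih]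
  | pred k ih =>
    apply (φ (-k - 1)).injective
    rw [← hx, ← intTrajectory_add_one, sub_add_cancel, ih]

end IntTrajectory

lemma piE_eq_iff {x y c : Bool} : piE (x, y) = c ↔ y = xor x c := by
  cases x <;> cases y <;> cases c <;> decide

/-- The bijection of vertices of `G` following the unique edge labelled `h k`. -/
def labelStep (h : SigH) (k : ℤ) : Equiv.Perm Bool :=
  Function.Involutive.toPerm (fun x => xor x (h k)) fun x => by simp

/-- The lift of `h` to `Σ_G` visiting the vertex `b` at time `0`. -/
def liftG (h : SigH) (b : Bool) : SigG :=
  ⟨fun k => (intTrajectory (labelStep h) b k, intTrajectory (labelStep h) b (k + 1)), fun _ => rfl⟩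

lemma piSig_liftG (h : SigH) (b : Bool) : piSig (liftG h b) = h := by
  funext k
  exact piE_eq_iff.mpr (intTrajectory_add_one _ _ _)

lemma eq_liftG_of_piSig_eq {h : SigH} {e : SigG} (he : piSig e = h) :
    e = liftG h (e.val 0).1 := by
  have hvertex : ∀ k, (e.val (k + 1)).1 = labelStep h k (e.val k).1 := fun k =>
    (e.prop k).symm.trans (piE_eq_iff.mp (congrFun he k))
  have htraj := eq_intTrajectory_of_add_one (labelStep h) (x := fun k => (e.val k).1) hvertex
  apply Subtype.ext
  funext k
  rw [Prod.ext_iff, e.prop k]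
  exact ⟨congrFun htraj k, congrFun htraj (k + 1)⟩

def piSigFiberEquivBool (h : SigH) : {e : SigG // piSig e = h} ≃ Bool where
  toFun e := (e.val.val 0).1
  invFun b := ⟨liftG h b, piSig_liftG h b⟩
  left_inv e := Subtype.ext (eq_liftG_of_piSig_eq e.prop).symm
  right_inv _ := rfl

theorem stmt13 :
    (∀ e : SigG, piSig (shiftG e) = shiftH (piSig e)) ∧
    Function.Surjective piSig ∧
    (∀ h : SigH, Nat.card {e : SigG // piSig e = h} = 2) :=
  ⟨fun _ => rfl, fun h => ⟨liftG h false, piSig_liftG h false⟩,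
    fun h => by rw [Nat.card_congr (piSigFiberEquivBool h), Nat.card_eq_fintype_card, Fintype.card_bool]⟩
end

section
/- Let η₁: X → X₁, η₂: X → X₂, π₁: X₁ → X₀, π₂: X₂ → X₀ satisfy π₁∘η₁ = π₂∘η₂, where all four spaces carry equivalence relations respected by the maps, η₁ and π₂ restrict to bijections on each equivalence class ('s-bijective'), and the spaces also carry a second family of equivalence relations respected by the maps for which η₂ and π₁ restrict to bijections on each class ('u-bijective'). Suppose additionally η₂ × η₁ is a bijection of X onto the fibre product {(x₂,x₁): π₂(x₂)=π₁(x₁)}. Then in the constructed square from the Y-construction, the projection η^Y₂: Y → Y₂ restricts to a bijection on each u-equivalence class: specifically, given ((y₀,ỹ₂),x,(y₀,x₁)) ∈ Y and (y₀',ỹ₂') ∈ Y₂ u-equivalent to (y₀,ỹ₂), there exist unique x' u-equivalent to x with η₂(x') = ρ̃(ỹ₂') and unique x₁' u-equivalent to x₁ with π₁(x₁') = ρ₀(y₀'), and moreover η₁(x') = x₁', so ((y₀',ỹ₂'),x',(y₀',x₁')) ∈ Y is the unique u-equivalent preimage. -/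
variable {X X₁ X₂ X₀ Y₀ Yt₂ : Type*}

/-- `f` respects the equivalence relations. -/
def RespectsRel {A B : Type*} (rA : A → A → Prop) (rB : B → B → Prop) (f : A → B) : Prop :=
  ∀ a b, rA a b → rB (f a) (f b)

/-- The restriction of `f` to each equivalence class is a bijection onto the class of the image. -/
def ClassBij {A B : Type*} (rA : A → A → Prop) (rB : B → B → Prop) (f : A → B) : Prop :=
  ∀ x : A,
    (∀ a b, rA x a → rA x b → f a = f b → a = b) ∧
    (∀ y, rB (f x) y → ∃ a, rA x a ∧ f a = y)

/-- The fibre product `Y₂ = Y₀ ×_{ρ₀, π₂ ∘ ρ̃} Ỹ₂`. -/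
def FibY₂ (ρ₀ : Y₀ → X₀) (π₂ : X₂ → X₀) (ρt : Yt₂ → X₂) : Type _ :=
  {p : Y₀ × Yt₂ // ρ₀ p.1 = π₂ (ρt p.2)}

/-- The space `Y`: triples `((y₀,ỹ₂), x, (y₀, x₁))` satisfying the defining conditions. -/
def FibY (η₁ : X → X₁) (η₂ : X → X₂) (π₁ : X₁ → X₀) (π₂ : X₂ → X₀)
    (ρ₀ : Y₀ → X₀) (ρt : Yt₂ → X₂) : Type _ :=
  {t : (Y₀ × Yt₂) × X × (Y₀ × X₁) //
    π₁ t.2.2.2 = ρ₀ t.1.1 ∧ ρ₀ t.1.1 = π₂ (ρt t.1.2) ∧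
    ρt t.1.2 = η₂ t.2.1 ∧ η₁ t.2.1 = t.2.2.2 ∧ t.1.1 = t.2.2.1}

/-- Projection `η^Y₂ : Y → Y₂`. -/
def etaY₂ (η₁ : X → X₁) (η₂ : X → X₂) (π₁ : X₁ → X₀) (π₂ : X₂ → X₀)
    (ρ₀ : Y₀ → X₀) (ρt : Yt₂ → X₂) :
    FibY η₁ η₂ π₁ π₂ ρ₀ ρt → FibY₂ ρ₀ π₂ ρt := fun t =>
  ⟨t.val.1, t.prop.2.1⟩

/-- Coordinatewise u-equivalence on `Y`. -/
def uRelY (uX : X → X → Prop) (uX₁ : X₁ → X₁ → Prop)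
    (uY₀ : Y₀ → Y₀ → Prop) (uYt₂ : Yt₂ → Yt₂ → Prop)
    {η₁ : X → X₁} {η₂ : X → X₂} {π₁ : X₁ → X₀} {π₂ : X₂ → X₀}
    {ρ₀ : Y₀ → X₀} {ρt : Yt₂ → X₂}
    (t t' : FibY η₁ η₂ π₁ π₂ ρ₀ ρt) : Prop :=
  uY₀ t.val.1.1 t'.val.1.1 ∧ uYt₂ t.val.1.2 t'.val.1.2 ∧ uX t.val.2.1 t'.val.2.1 ∧
    uY₀ t.val.2.2.1 t'.val.2.2.1 ∧ uX₁ t.val.2.2.2 t'.val.2.2.2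

theorem stmt16
    (η₁ : X → X₁) (η₂ : X → X₂) (π₁ : X₁ → X₀) (π₂ : X₂ → X₀)
    (ρ₀ : Y₀ → X₀) (ρt : Yt₂ → X₂)
    (hcomm : ∀ x, π₁ (η₁ x) = π₂ (η₂ x))
    -- stable equivalence relations
    (sX : X → X → Prop) (sX₁ : X₁ → X₁ → Prop) (sX₂ : X₂ → X₂ → Prop) (sX₀ : X₀ → X₀ → Prop)
    (sY₀ : Y₀ → Y₀ → Prop) (sYt₂ : Yt₂ → Yt₂ → Prop)
    (hsX : Equivalence sX) (hsX₁ : Equivalence sX₁) (hsX₂ : Equivalence sX₂)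
    (hsX₀ : Equivalence sX₀) (hsY₀ : Equivalence sY₀) (hsYt₂ : Equivalence sYt₂)
    -- unstable equivalence relations
    (uX : X → X → Prop) (uX₁ : X₁ → X₁ → Prop) (uX₂ : X₂ → X₂ → Prop) (uX₀ : X₀ → X₀ → Prop)
    (uY₀ : Y₀ → Y₀ → Prop) (uYt₂ : Yt₂ → Yt₂ → Prop)
    (huX : Equivalence uX) (huX₁ : Equivalence uX₁) (huX₂ : Equivalence uX₂)
    (huX₀ : Equivalence uX₀) (huY₀ : Equivalence uY₀) (huYt₂ : Equivalence uYt₂)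
    -- all maps respect both families of relations
    (hη₁s : RespectsRel sX sX₁ η₁) (hη₁u : RespectsRel uX uX₁ η₁)
    (hη₂s : RespectsRel sX sX₂ η₂) (hη₂u : RespectsRel uX uX₂ η₂)
    (hπ₁s : RespectsRel sX₁ sX₀ π₁) (hπ₁u : RespectsRel uX₁ uX₀ π₁)
    (hπ₂s : RespectsRel sX₂ sX₀ π₂) (hπ₂u : RespectsRel uX₂ uX₀ π₂)
    (hρ₀s : RespectsRel sY₀ sX₀ ρ₀) (hρ₀u : RespectsRel uY₀ uX₀ ρ₀)
    (hρts : RespectsRel sYt₂ sX₂ ρt) (hρtu : RespectsRel uYt₂ uX₂ ρt)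
    -- s-bijectivity and u-bijectivity hypotheses
    (hη₁sbij : ClassBij sX sX₁ η₁) (hπ₂sbij : ClassBij sX₂ sX₀ π₂)
    (hη₂ubij : ClassBij uX uX₂ η₂) (hπ₁ubij : ClassBij uX₁ uX₀ π₁)
    (hρ₀sbij : ClassBij sY₀ sX₀ ρ₀) (hρtsbij : ClassBij sYt₂ sX₂ ρt)
    -- η₂ × η₁ is a conjugacy onto the fibre product
    (hconj : Function.Bijective
      (fun x : X => (⟨(η₂ x, η₁ x), (hcomm x).symm⟩ : {p : X₂ × X₁ // π₂ p.1 = π₁ p.2}))) :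
    ∀ (t : FibY η₁ η₂ π₁ π₂ ρ₀ ρt) (y₀' : Y₀) (yt₂' : Yt₂)
      (h' : ρ₀ y₀' = π₂ (ρt yt₂')),
      uY₀ t.val.1.1 y₀' → uYt₂ t.val.1.2 yt₂' →
      (∃! x' : X, uX t.val.2.1 x' ∧ η₂ x' = ρt yt₂') ∧
      (∃! x₁' : X₁, uX₁ t.val.2.2.2 x₁' ∧ π₁ x₁' = ρ₀ y₀') ∧
      (∀ (x' : X) (x₁' : X₁),
        uX t.val.2.1 x' → η₂ x' = ρt yt₂' → uX₁ t.val.2.2.2 x₁' → π₁ x₁' = ρ₀ y₀' →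
        η₁ x' = x₁' ∧
        ∃ t' : FibY η₁ η₂ π₁ π₂ ρ₀ ρt, t'.val = ((y₀', yt₂'), x', (y₀', x₁'))) ∧
      (∃! t' : FibY η₁ η₂ π₁ π₂ ρ₀ ρt,
        uRelY uX uX₁ uY₀ uYt₂ t t' ∧
          etaY₂ η₁ η₂ π₁ π₂ ρ₀ ρt t' = ⟨(y₀', yt₂'), h'⟩) := by

  rintro ⟨⟨⟨y₀, yt₂⟩, x, y₀₂, x₁⟩, hA, hB, hC, hD, hE⟩ y₀' yt₂' h' hu₀ hut
  dsimp only at hA hB hC hD hE ⊢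
  subst hE hD
  -- key u-equivalences
  have hx2 : uX₂ (η₂ x) (ρt yt₂') := hC ▸ hρtu _ _ hut
  obtain ⟨x', hxx', hx'⟩ := (hη₂ubij x).2 (ρt yt₂') hx2
  have hx1 : uX₀ (π₁ (η₁ x)) (ρ₀ y₀') := hA ▸ hρ₀u _ _ hu₀
  obtain ⟨x₁', hx₁x₁', hx₁'⟩ := (hπ₁ubij (η₁ x)).2 (ρ₀ y₀') hx1
  have key : ∀ a : X, ∀ b : X₁, uX x a → η₂ a = ρt yt₂' → uX₁ (η₁ x) b →
      π₁ b = ρ₀ y₀' → η₁ a = b := by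
    intro a b ha hea hb hpb
    refine (hπ₁ubij (η₁ x)).1 _ _ (hη₁u _ _ ha) hb ?_
    rw [hcomm, hea, ← h', hpb]
  have huniqx : ∀ a : X, uX x a ∧ η₂ a = ρt yt₂' → a = x' := by
    rintro a ⟨ha, hea⟩
    exact (hη₂ubij x).1 _ _ ha hxx' (hea.trans hx'.symm)
  refine ⟨⟨x', ⟨hxx', hx'⟩, huniqx⟩, ⟨x₁', ⟨hx₁x₁', hx₁'⟩, ?_⟩, ?_, ?_⟩
  · rintro b ⟨hb, hpb⟩
    have h1 := key x' b hxx' hx' hb hpb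
    have h2 := key x' x₁' hxx' hx' hx₁x₁' hx₁'
    rw [← h1, h2]
  · intro a b ha hea hb hpb
    have h1 := key a b ha hea hb hpb
    refine ⟨h1, ⟨((y₀', yt₂'), a, (y₀', b)), ?_⟩, rfl⟩
    exact ⟨hpb, h', hea.symm, h1, rfl⟩
  · have h1 := key x' x₁' hxx' hx' hx₁x₁' hx₁'
    refine ⟨⟨((y₀', yt₂'), x', (y₀', x₁')), ⟨hx₁', h', hx'.symm, h1, rfl⟩⟩,
      ⟨⟨hu₀, hut, hxx', hu₀, hx₁x₁'⟩, rfl⟩, ?_⟩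
    rintro ⟨⟨⟨z₀, zt₂⟩, a, z₀₂, b⟩, hA', hB', hC', hD', hE'⟩ ⟨⟨-, -, hua, -, -⟩, heq⟩
    dsimp only at hA' hB' hC' hD' hE' hua heq
    subst hE' hD'
    have hz : (z₀, zt₂) = (y₀', yt₂') := congrArg Subtype.val heq
    obtain ⟨rfl, rfl⟩ := Prod.mk.injEq .. ▸ hz
    have : a = x' := huniqx a ⟨hua, hC'.symm⟩
    subst this
    exact Subtype.ext (by simp [h1])
end
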